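/- arXiv:1708.09748 — 2 statements merged into one kernel-verified Lean document; each statement's English description precedes it below -/
import Mathlib

section
/- Let $\lambda \in \mathbb{C}^*$, $\alpha \in \mathbb{C}$, $h \in \mathbb{C}[t]$. The Virasoro module $\Omega(\lambda,\alpha,h) = \mathbb{C}[t,\partial]$ with action $d_m(\partial^i f) = \lambda^m(\partial-m)^i\big(\partial f + m G(f) - m^2 \alpha F(f)\big)$, $c = 0$, where $F(f) = \frac{h(t)-h(\alpha)}{t-\alpha} f - f'$ and $G(f) = h(\alpha) f + t F(f)$, is simple if and only if $\deg(h) = 1$ and $\alpha \neq 0$. -/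
/-!
For fixed `w`, `λ^(-m) d_m w` is a polynomial in `m` with coefficients in `Ω = ℂ[t][∂]`, so
(Vandermonde) a subspace `W` stable under all `d_m` contains each of these coefficients. For
`w = f ∈ ℂ[t]` they are `∂ f`, `G f` and `-α F f`, and for `w` of `∂`-degree `n` the coefficient of
`m^(n+2)` is `±α F` of the leading coefficient of `w`, an element of `ℂ[t]`.

If `deg h = 1` then `(h(t) - h(α))/(t - α) = a ≠ 0` and `F f = a f - f'`. So for `α ≠ 0`,
`W ∩ ℂ[t]` is nonzero and stable under `d/dt`, hence contains `1`; then
`t F(t^k) = G(t^k) - h(α) t^k` yields every `t^k`, and `d_0 = ∂·` gives all of `Ω`.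

Conversely, whenever `V ⊆ ℂ[t]` is stable under `G` and `α F`, the polynomials in `∂` with
coefficients in `V` form a submodule. A proper nonzero such `V` exists otherwise: `{f | f(0) = 0}`
if `α = 0`, the constants if `h` is constant, and the image of `F` if `deg h ≥ 2`, since then `F`
raises degrees and misses `1`.
-/

noncomputable section
open Polynomial

/-- The exact polynomial quotient `(h(t) - h(α)) / (t - α)`. -/
def hquot (h : ℂ[X]) (α : ℂ) : ℂ[X] := (h - C (h.eval α)) /ₘ (X - C α)

/-- `F(f) = ((h(t)-h(α))/(t-α)) f - f'`. -/
def Fop (h : ℂ[X]) (α : ℂ) (f : ℂ[X]) : ℂ[X] := hquot h α * f - derivative f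

/-- `G(f) = h(α) f + t F(f)`. -/
def Gop (h : ℂ[X]) (α : ℂ) (f : ℂ[X]) : ℂ[X] := C (h.eval α) * f + X * Fop h α f

/-- The action of `d_m` on `Ω(λ,α,h) = ℂ[t,∂]`, modelled as `(ℂ[t])[∂]`:
on `∂^i f(t)`, `d_m(∂^i f) = λ^m (∂-m)^i (∂ f + m G(f) - m² α F(f))`,
extended linearly; `c` acts by `0`. -/
def omegaD (lam α : ℂ) (h : ℂ[X]) (m : ℤ) (p : Polynomial ℂ[X]) : Polynomial ℂ[X] :=
  lam ^ m • p.sum fun i f =>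
    ((X : Polynomial ℂ[X]) - Polynomial.C (C (m : ℂ))) ^ i *
      ((X : Polynomial ℂ[X]) * Polynomial.C f +
        Polynomial.C (C (m : ℂ) * Gop h α f - C ((m : ℂ) ^ 2 * α) * Fop h α f))

namespace Polynomial

theorem coeff_mem_of_forall_eval_mem {K R : Type*} [Field K] [CommRing R] [Algebra K R]
    (W : Submodule K R) {S : Set K} (hS : S.Infinite) {P : R[X]}
    (hP : ∀ z ∈ S, P.eval (algebraMap K R z) ∈ W) (j : ℕ) : P.coeff j ∈ W := by
  rw [← Submodule.Quotient.mk_eq_zero, ← Module.forall_dual_apply_eq_zero_iff K]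
  intro φ
  -- `φ` turns `P` into a scalar polynomial `s` vanishing on the infinite set `S`.
  set ψ : R →ₗ[K] K := φ ∘ₗ W.mkQ
  set s : K[X] := ∑ i ∈ Finset.range (P.natDegree + 1), C (ψ (P.coeff i)) * X ^ i
  have hs_eval (z : K) : s.eval z = ψ (P.eval (algebraMap K R z)) := by
    rw [eval_eq_sum_range (p := P), map_sum, eval_finsetSum]
    refine Finset.sum_congr rfl fun i _ => ?_
    rw [← map_pow, ← Algebra.commutes, ← Algebra.smul_def, map_smul, smul_eq_mul,
      eval_C_mul, eval_X_pow, mul_comm]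
  have hs : s = 0 := eq_zero_of_infinite_isRoot s <| hS.mono fun z hz => by
    simp [hs_eval, ψ, (Submodule.Quotient.mk_eq_zero W).2 (hP z hz)]
  by_cases hj : j < P.natDegree + 1
  · simpa [s, finsetSum_coeff, coeff_C_mul_X_pow, hj, ψ] using congrArg (coeff · j) hs
  · simp [coeff_eq_zero_of_natDegree_lt (by omega : P.natDegree < j)]

theorem one_mem_of_derivative_mem {K : Type*} [Field K] [CharZero K] {V : Submodule K K[X]}
    (hV : V ≠ ⊥) (hd : ∀ f ∈ V, derivative f ∈ V) : (1 : K[X]) ∈ V := by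
  obtain ⟨f, hfV, hf⟩ := (Submodule.ne_bot_iff V).1 hV
  set g := derivative^[f.natDegree] f
  have hgV : g ∈ V := Function.Iterate.rec (· ∈ V) hfV hd _
  have hg : g = C (g.coeff 0) :=
    eq_C_of_natDegree_eq_zero (by simpa using natDegree_iterate_derivative f f.natDegree)
  have hg0 : g.coeff 0 ≠ 0 := by
    simpa [g, coeff_iterate_derivative, Nat.descFactorial_self, Nat.factorial_ne_zero] using hf
  have h1 : (g.coeff 0)⁻¹ • g = 1 := by
    rw [hg, smul_C, coeff_C_zero, smul_eq_mul, inv_mul_cancel₀ hg0, C_1]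
  exact h1 ▸ V.smul_mem _ hgV

section CoeffsIn

variable {K R : Type*} [CommSemiring K]

theorem eq_top_of_monomial_mem [Semiring R] [Module K R] {W : Submodule K R[X]}
    (hW : ∀ n r, monomial n r ∈ W) : W = ⊤ :=
  eq_top_iff.2 fun p _ => p.induction_on' (fun _ _ => W.add_mem) hW

def coeffsIn [Semiring R] [Module K R] (V : Submodule K R) : Submodule K R[X] where
  carrier := {p | ∀ i, p.coeff i ∈ V}
  add_mem' hp hq i := by simpa using add_mem (hp i) (hq i)
  zero_mem' i := by simp
  smul_mem' c p hp i := by simpa using V.smul_mem c (hp i)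

section Module

variable [Semiring R] [Module K R] {V : Submodule K R}

theorem C_mem_coeffsIn {r : R} : C r ∈ coeffsIn V ↔ r ∈ V := by
  refine ⟨fun h => by simpa using h 0, fun h i => ?_⟩
  rw [coeff_C]
  split_ifs
  exacts [h, V.zero_mem]

@[simp]
theorem coeffsIn_eq_bot_iff : coeffsIn V = ⊥ ↔ V = ⊥ := by
  refine ⟨fun h => (Submodule.eq_bot_iff V).2 fun r hr => ?_, fun h => ?_⟩
  · simpa [h] using C_mem_coeffsIn.2 hr
  · refine (Submodule.eq_bot_iff _).2 fun p hp => ext fun i => ?_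
    simpa [h] using hp i

@[simp]
theorem coeffsIn_eq_top_iff : coeffsIn V = ⊤ ↔ V = ⊤ := by
  refine ⟨fun h => eq_top_iff.2 fun r _ => C_mem_coeffsIn.1 (h ▸ Submodule.mem_top), fun h => ?_⟩
  exact eq_top_iff.2 fun p _ i => h ▸ Submodule.mem_top

end Module

theorem map_algebraMap_mul_mem_coeffsIn [CommSemiring R] [Algebra K R] {V : Submodule K R}
    (q : K[X]) {p : R[X]} (hp : p ∈ coeffsIn V) : q.map (algebraMap K R) * p ∈ coeffsIn V :=
  fun k => by
    rw [coeff_mul]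
    exact sum_mem fun ij _ => by
      simpa [coeff_map, ← Algebra.smul_def] using V.smul_mem (q.coeff ij.1) (hp ij.2)

end CoeffsIn

end Polynomial

local notation "Ω" => Polynomial ℂ[X]

section Quotient

variable {h : ℂ[X]} {α : ℂ}

theorem X_sub_C_mul_hquot (h : ℂ[X]) (α : ℂ) : (X - C α) * hquot h α = h - C (h.eval α) :=
  mul_divByMonic_eq_iff_isRoot.2 (by simp)

theorem natDegree_hquot (h : ℂ[X]) (α : ℂ) : (hquot h α).natDegree = h.natDegree - 1 := by
  rw [hquot, natDegree_divByMonic _ (monic_X_sub_C α), natDegree_sub_C, natDegree_X_sub_C]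

theorem hquot_eq_zero (hh : h.degree ≤ 0) : hquot h α = 0 := by
  rw [hquot, eq_C_of_degree_le_zero hh, eval_C, sub_self, zero_divByMonic]

theorem hquot_ne_zero (hh : 0 < h.degree) : hquot h α ≠ 0 := by
  intro hq
  have := X_sub_C_mul_hquot h α
  rw [hq, mul_zero, eq_comm, sub_eq_zero] at this
  exact (this ▸ hh).not_ge degree_C_le

theorem degree_hquot_pos (hh : 1 < h.degree) : 0 < (hquot h α).degree := by
  have : ¬h.natDegree ≤ 1 := by
    rw [natDegree_le_iff_degree_le, Nat.cast_one]
    exact hh.not_ge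
  rw [← natDegree_pos_iff_degree_pos, natDegree_hquot]
  omega

theorem Fop_X_mul (f : ℂ[X]) : Fop h α (X * f) = X * Fop h α f - f := by
  simp only [Fop, derivative_mul, derivative_X, one_mul]
  ring

theorem degree_Fop (hq : hquot h α ≠ 0) {f : ℂ[X]} (hf : f ≠ 0) :
    (Fop h α f).degree = (hquot h α).degree + f.degree := by
  rw [Fop, ← degree_mul]
  refine degree_sub_eq_left_of_degree_lt ((degree_derivative_lt hf).trans_le ?_)
  rw [degree_mul]
  exact le_add_of_nonneg_left (zero_le_degree_iff.2 hq)

theorem Fop_ne_zero (hq : hquot h α ≠ 0) {f : ℂ[X]} (hf : f ≠ 0) : Fop h α f ≠ 0 := by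
  rw [Ne, ← degree_eq_bot, degree_Fop hq hf, WithBot.add_eq_bot, degree_eq_bot, degree_eq_bot]
  exact not_or.2 ⟨hq, hf⟩

theorem Fop_ne_one (hh : 1 < h.degree) (f : ℂ[X]) : Fop h α f ≠ 1 := by
  rcases eq_or_ne f 0 with rfl | hf
  · simp [Fop]
  intro hF
  have : (hquot h α).degree + f.degree ≤ 0 := by
    rw [← degree_Fop (hquot_ne_zero (zero_lt_one.trans hh)) hf, hF, degree_one]
  exact ((degree_hquot_pos hh).trans_le (le_add_of_nonneg_right (zero_le_degree_iff.2 hf))).not_ge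
    this

end Quotient

section Action

variable {h : ℂ[X]} {α : ℂ}

theorem omegaD_zero (lam α : ℂ) (h : ℂ[X]) (p : Ω) : omegaD lam α h 0 p = X * p := by
  simp only [omegaD, zpow_zero, one_smul, Int.cast_zero, map_zero, sub_zero, zero_mul,
    ne_eq, OfNat.ofNat_ne_zero, not_false_eq_true, zero_pow, add_zero]
  conv_rhs => rw [← p.sum_C_mul_X_pow_eq]
  simp only [sum_def, Finset.mul_sum]
  exact Finset.sum_congr rfl fun _ _ => by ring

/-- `λ^(-m) d_m p` as a polynomial in `m`, which is the variable `X` of `Polynomial Ω`. -/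
def actionPoly (h : ℂ[X]) (α : ℂ) (p : Ω) : Polynomial Ω :=
  p.sum fun i f => (C X - X) ^ i *
    (C (X * C f) + C (C (Gop h α f)) * X - C (C (C α * Fop h α f)) * X ^ 2)

theorem omegaD_eq_smul_eval (lam : ℂ) (m : ℤ) (p : Ω) :
    omegaD lam α h m p = lam ^ m • (actionPoly h α p).eval (C (C (m : ℂ))) := by
  simp only [omegaD, actionPoly, sum_def, eval_finsetSum]
  congr 1
  refine Finset.sum_congr rfl fun i _ => ?_
  simp only [eval_mul, eval_pow, eval_sub, eval_add, eval_C, eval_X, map_sub, map_mul, map_pow]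
  ring

theorem actionPoly_C (g : ℂ[X]) :
    actionPoly h α (C g) =
      C (X * C g) + C (C (Gop h α g)) * X - C (C (C α * Fop h α g)) * X ^ 2 := by
  rw [actionPoly, sum_C_index] <;> simp [Fop, Gop]
  exact sub_self (0 : Polynomial Ω)

theorem coeff_one_actionPoly_C (g : ℂ[X]) :
    (actionPoly h α (C g)).coeff 1 = C (Gop h α g) := by
  rw [actionPoly_C, coeff_sub, coeff_add, coeff_C_mul_X, coeff_C_mul_X_pow, coeff_C]
  simp

theorem coeff_two_actionPoly_C (g : ℂ[X]) :
    (actionPoly h α (C g)).coeff 2 = -C (C α * Fop h α g) := by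
  rw [actionPoly_C, coeff_sub, coeff_add, coeff_C_mul_X, coeff_C_mul_X_pow, coeff_C]
  simp

theorem coeff_actionPoly_natDegree_add_two {p : Ω} (hp : p ≠ 0) :
    (actionPoly h α p).coeff (p.natDegree + 2) =
      (-1 : ℂ) ^ (p.natDegree + 1) • C (C α * Fop h α p.leadingCoeff) := by
  have hquad (f : ℂ[X]) :
      (C (X * C f) + C (C (Gop h α f)) * X - C (C (C α * Fop h α f)) * X ^ 2).natDegree ≤ 2 := by
    compute_degree
  have hpow (i : ℕ) : ((C (X : Ω) - X) ^ i).natDegree ≤ i := by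
    compute_degree
  rw [actionPoly, sum_def, finsetSum_coeff, Finset.sum_eq_single p.natDegree]
  · have hlead : ((C (X : Ω) - X) ^ p.natDegree).coeff p.natDegree = (-1) ^ p.natDegree := by
      have := coeff_pow_of_natDegree_le (m := p.natDegree) (p := C (X : Ω) - X)
        (by compute_degree : _ ≤ 1)
      rw [mul_one] at this
      simp [this]
    rw [coeff_mul_add_eq_of_natDegree_le (hpow _) (hquad _), hlead, coeff_sub, coeff_add,
      coeff_C_mul_X_pow, coeff_C_mul_X, coeff_C]
    simp only [Algebra.smul_def, map_pow, map_neg, map_one, leadingCoeff,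
      OfNat.ofNat_ne_zero, OfNat.ofNat_ne_one, ↓reduceIte]
    ring
  · intro i hi hin
    exact coeff_eq_zero_of_natDegree_lt <| natDegree_mul_le.trans_lt <| by
      have := (hpow i).trans_lt ((le_natDegree_of_mem_supp i hi).lt_of_ne hin)
      linarith [hquad (p.coeff i)]
  · intro hn
    exact absurd (natDegree_mem_support_of_nonzero hp) hn

end Action

def IsOmegaInvariant (lam α : ℂ) (h : ℂ[X]) (W : Submodule ℂ Ω) : Prop :=
  ∀ (m : ℤ) (w : Ω), w ∈ W → omegaD lam α h m w ∈ W

def IsOmegaSimple (lam α : ℂ) (h : ℂ[X]) : Prop :=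
  ∀ W : Submodule ℂ Ω, IsOmegaInvariant lam α h W → W = ⊥ ∨ W = ⊤

section Simple

variable {lam α : ℂ} {h : ℂ[X]} {W : Submodule ℂ Ω}

namespace IsOmegaInvariant

theorem X_mul_mem (hW : IsOmegaInvariant lam α h W) {w : Ω} (hw : w ∈ W) : X * w ∈ W :=
  omegaD_zero lam α h w ▸ hW 0 w hw

theorem coeff_actionPoly_mem (hlam : lam ≠ 0) (hW : IsOmegaInvariant lam α h W) {w : Ω}
    (hw : w ∈ W) (j : ℕ) : (actionPoly h α w).coeff j ∈ W := by
  refine coeff_mem_of_forall_eval_mem W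
    (Set.infinite_range_of_injective (Int.cast_injective (α := ℂ))) ?_ j
  rintro _ ⟨m, rfl⟩
  have := hW m w hw
  rw [omegaD_eq_smul_eval] at this
  exact (W.smul_mem_iff (zpow_ne_zero m hlam)).1 this

theorem C_Gop_mem (hlam : lam ≠ 0) (hW : IsOmegaInvariant lam α h W) {g : ℂ[X]}
    (hg : C g ∈ W) : C (Gop h α g) ∈ W := by
  simpa [coeff_one_actionPoly_C] using hW.coeff_actionPoly_mem hlam hg 1

theorem C_Fop_mem (hlam : lam ≠ 0) (hα : α ≠ 0) (hW : IsOmegaInvariant lam α h W) {g : ℂ[X]}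
    (hg : C g ∈ W) : C (Fop h α g) ∈ W := by
  have := W.neg_mem (hW.coeff_actionPoly_mem hlam hg 2)
  rwa [coeff_two_actionPoly_C, neg_neg, ← smul_eq_C_mul, ← smul_C, W.smul_mem_iff hα] at this

end IsOmegaInvariant

theorem eq_top_of_Gop_mem_of_Fop_mem (hdeg : h.degree = 1) {V : Submodule ℂ ℂ[X]} (hV : V ≠ ⊥)
    (hG : ∀ f ∈ V, Gop h α f ∈ V) (hF : ∀ f ∈ V, Fop h α f ∈ V) : V = ⊤ := by
  obtain ⟨a, ha, hq⟩ : ∃ a : ℂ, a ≠ 0 ∧ hquot h α = C a := by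
    have h0 : (hquot h α).natDegree = 0 := by
      rw [natDegree_hquot, natDegree_eq_of_degree_eq_some (n := 1) hdeg]
    refine ⟨_, fun ha => hquot_ne_zero (α := α) (hdeg ▸ zero_lt_one) ?_,
      eq_C_of_natDegree_eq_zero h0⟩
    rw [eq_C_of_natDegree_eq_zero h0, ha, C_0]
  have hd (f : ℂ[X]) (hf : f ∈ V) : derivative f ∈ V := by
    have : derivative f = a • f - Fop h α f := by rw [Fop, hq, smul_eq_C_mul]; ring
    exact this ▸ V.sub_mem (V.smul_mem a hf) (hF f hf)
  have hX (k : ℕ) : X ^ k ∈ V := by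
    induction k with
    | zero => simpa using one_mem_of_derivative_mem hV hd
    | succ k ih =>
      have hXd : X * derivative (X ^ k : ℂ[X]) = (k : ℂ) • X ^ k := by
        rcases k with _ | k
        · simp
        · rw [derivative_X_pow, Nat.add_sub_cancel, smul_eq_C_mul]; ring
      have : a • X ^ (k + 1) = Gop h α (X ^ k) - h.eval α • X ^ k + (k : ℂ) • X ^ k := by
        rw [Gop, Fop, hq, mul_sub, hXd, smul_eq_C_mul, smul_eq_C_mul, smul_eq_C_mul]; ring
      rw [← V.smul_mem_iff ha, this]
      exact V.add_mem (V.sub_mem (hG _ ih) (V.smul_mem _ ih)) (V.smul_mem _ ih)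
  exact eq_top_of_monomial_mem fun n c => by
    simpa [← C_mul_X_pow_eq_monomial, ← smul_eq_C_mul] using V.smul_mem c (hX n)

theorem IsOmegaInvariant.eq_top (hlam : lam ≠ 0) (hα : α ≠ 0) (hdeg : h.degree = 1)
    (hW : IsOmegaInvariant lam α h W) (hne : W ≠ ⊥) : W = ⊤ := by
  set V := W.comap ((monomial 0).restrictScalars ℂ : ℂ[X] →ₗ[ℂ] Ω)
  have hmemV (g : ℂ[X]) : g ∈ V ↔ C g ∈ W := by simp [V]
  have hV : V ≠ ⊥ := by
    obtain ⟨p, hpW, hp⟩ := (Submodule.ne_bot_iff W).1 hne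
    have htop := hW.coeff_actionPoly_mem hlam hpW (p.natDegree + 2)
    rw [coeff_actionPoly_natDegree_add_two hp, W.smul_mem_iff (by simp), ← smul_eq_C_mul,
      ← smul_C, W.smul_mem_iff hα] at htop
    exact (Submodule.ne_bot_iff V).2 ⟨_, (hmemV _).2 htop,
      Fop_ne_zero (hquot_ne_zero (hdeg ▸ zero_lt_one)) (leadingCoeff_ne_zero.2 hp)⟩
  have hVtop : V = ⊤ := eq_top_of_Gop_mem_of_Fop_mem hdeg hV
    (fun f hf => (hmemV _).2 (hW.C_Gop_mem hlam ((hmemV f).1 hf)))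
    (fun f hf => (hmemV _).2 (hW.C_Fop_mem hlam hα ((hmemV f).1 hf)))
  refine eq_top_of_monomial_mem fun n g => ?_
  rw [← C_mul_X_pow_eq_monomial, ← X_pow_mul]
  induction n with
  | zero => simpa using (hmemV g).1 (hVtop ▸ Submodule.mem_top)
  | succ n ih => simpa [pow_succ', mul_assoc] using hW.X_mul_mem ih

end Simple

section NotSimple

variable {lam α : ℂ} {h : ℂ[X]}

theorem isOmegaInvariant_coeffsIn {V : Submodule ℂ ℂ[X]} (hG : ∀ f ∈ V, Gop h α f ∈ V)
    (hF : ∀ f ∈ V, α • Fop h α f ∈ V) : IsOmegaInvariant lam α h (coeffsIn V) := by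
  intro m w hw
  refine Submodule.smul_mem _ _ (sum_mem fun i _ => ?_)
  have hpow : ((X : Ω) - C (C (m : ℂ))) ^ i = ((X - C (m : ℂ)) ^ i).map (algebraMap ℂ ℂ[X]) := by
    simp
  beta_reduce
  rw [hpow]
  refine map_algebraMap_mul_mem_coeffsIn _ (add_mem ?_ (C_mem_coeffsIn.2 ?_))
  · simpa using map_algebraMap_mul_mem_coeffsIn X (C_mem_coeffsIn.2 (hw i))
  · have : C (m : ℂ) * Gop h α (w.coeff i) - C ((m : ℂ) ^ 2 * α) * Fop h α (w.coeff i) =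
        (m : ℂ) • Gop h α (w.coeff i) - ((m : ℂ) ^ 2) • α • Fop h α (w.coeff i) := by
      rw [smul_smul, smul_eq_C_mul, smul_eq_C_mul]
    rw [this]
    exact V.sub_mem (V.smul_mem _ (hG _ (hw i))) (V.smul_mem _ (hF _ (hw i)))

namespace IsOmegaSimple

theorem eq_bot_or_eq_top (hs : IsOmegaSimple lam α h) {V : Submodule ℂ ℂ[X]}
    (hG : ∀ f ∈ V, Gop h α f ∈ V) (hF : ∀ f ∈ V, α • Fop h α f ∈ V) : V = ⊥ ∨ V = ⊤ := by
  simpa using hs _ (isOmegaInvariant_coeffsIn hG hF)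

theorem alpha_ne_zero (hs : IsOmegaSimple lam α h) : α ≠ 0 := by
  rintro rfl
  have hG (f : ℂ[X]) (hf : f ∈ LinearMap.ker (leval 0)) :
      Gop h 0 f ∈ LinearMap.ker (leval 0) := by
    simp_all [Gop]
  rcases hs.eq_bot_or_eq_top hG (by simp) with hV | hV
  · exact X_ne_zero ((Submodule.eq_bot_iff _).1 hV X (by simp))
  · simpa using Submodule.eq_top_iff'.1 hV 1

theorem one_le_degree (hs : IsOmegaSimple lam α h) : 1 ≤ h.degree := by
  by_contra! hh
  have hq : hquot h α = 0 := hquot_eq_zero (Nat.WithBot.lt_one_iff_le_zero.1 hh)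
  have hF (f : ℂ[X]) (hf : f ∈ LinearMap.ker derivative) : Fop h α f = 0 := by
    simp_all [Fop]
  have hG (f : ℂ[X]) (hf : f ∈ LinearMap.ker derivative) :
      Gop h α f ∈ LinearMap.ker derivative := by
    simp_all [Gop]
  rcases hs.eq_bot_or_eq_top hG (fun f hf => by simp [hF f hf]) with hV | hV
  · exact one_ne_zero ((Submodule.eq_bot_iff _).1 hV 1 (by simp))
  · simpa using Submodule.eq_top_iff'.1 hV X

theorem degree_le_one (hs : IsOmegaSimple lam α h) : h.degree ≤ 1 := by
  by_contra! hh
  set V := LinearMap.range (LinearMap.mulLeft ℂ (hquot h α) - derivative)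
  have hFV (f : ℂ[X]) : Fop h α f ∈ V := ⟨f, rfl⟩
  have hG (f : ℂ[X]) (hf : f ∈ V) : Gop h α f ∈ V := by
    have : Gop h α f = h.eval α • f + (Fop h α (X * f) + f) := by
      rw [Gop, Fop_X_mul, smul_eq_C_mul]; ring
    exact this ▸ V.add_mem (V.smul_mem _ hf) (V.add_mem (hFV _) hf)
  rcases hs.eq_bot_or_eq_top hG (fun f _ => V.smul_mem α (hFV f)) with hV | hV
  · exact hquot_ne_zero (zero_lt_one.trans hh)
      (by simpa [Fop] using (Submodule.eq_bot_iff _).1 hV _ (hFV 1))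
  · obtain ⟨u, hu⟩ := Submodule.eq_top_iff'.1 hV 1
    exact Fop_ne_one hh u hu

end IsOmegaSimple

end NotSimple

/-- For `λ ∈ ℂ*`, `α ∈ ℂ`, `h ∈ ℂ[t]`, the Virasoro module `Ω(λ,α,h)` is simple
(its only subspaces invariant under all the operators `d_m`, `m ∈ ℤ`, are `0` and the
whole module; the condition on `c` is vacuous since `c` acts by `0`) if and only if
`deg h = 1` and `α ≠ 0`. -/
theorem stmt6 (lam : ℂ) (hlam : lam ≠ 0) (α : ℂ) (h : ℂ[X]) :
    (∀ W : Submodule ℂ (Polynomial ℂ[X]),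
        (∀ (m : ℤ) (w : Polynomial ℂ[X]), w ∈ W → omegaD lam α h m w ∈ W) →
      W = ⊥ ∨ W = ⊤) ↔ (h.degree = 1 ∧ α ≠ 0) := by
  change IsOmegaSimple lam α h ↔ _
  refine ⟨fun hs => ⟨le_antisymm hs.degree_le_one hs.one_le_degree, hs.alpha_ne_zero⟩, ?_⟩
  rintro ⟨hdeg, hα⟩ W hW
  exact (eq_or_ne W ⊥).imp_right (IsOmegaInvariant.eq_top hlam hα hdeg hW)
end
end

section
/- With notation as above, for $m \in \mathbb{Z}_{\geq 0}$ (setting $W_{-1} = 0$), the quotient Virasoro module $\overline{W}_m = W_m / W_{m-1}$ is isomorphic to the Virasoro module $\Omega(\lambda, \alpha, h - m - \beta)$, via the map sending $\partial_1^m (\partial_1+\partial_2)^n f + W_{m-1} \mapsto \partial^n f$. -/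
noncomputable section
open Polynomial

/-- The tensor product `Ω(λ,α,h) ⊗ Ω(λ,β)`, identified with `ℂ[∂₁,∂₂,t]`:
variable `0` is `∂₁`, variable `1` is `∂₂`, variable `2` is `t`. -/
abbrev P3 : Type := MvPolynomial (Fin 3) ℂ

/-- The embedding of `ℂ[t]` into `ℂ[∂₁,∂₂,t]` (the variable `t` is `X 2`). -/
def embt (f : ℂ[X]) : P3 := Polynomial.aeval (MvPolynomial.X (2 : Fin 3)) f

/-- The diagonal Virasoro action of `d_k` on `Ω(λ,α,h) ⊗ Ω(λ,β) = ℂ[∂₁,∂₂,t]`: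
on the monomial `∂₁^a t^c ⊗ ∂₂^b` it is
`d_k(∂₁^a t^c) ⊗ ∂₂^b + ∂₁^a t^c ⊗ d_k(∂₂^b)`, where
`d_k(∂₁^a t^c) = λ^k (∂₁-k)^a (∂₁ t^c + k G(t^c) - k² α F(t^c))` and
`d_k(∂₂^b) = λ^k (∂₂-k)^b (∂₂ - β k)`, extended linearly; `c` acts by `0`. -/
def tensorD (lam α β : ℂ) (h : ℂ[X]) (k : ℤ) (p : P3) : P3 :=
  lam ^ k • ∑ e ∈ p.support,
    MvPolynomial.C (MvPolynomial.coeff e p) *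
      ((MvPolynomial.X (0 : Fin 3) - MvPolynomial.C ((k : ℂ))) ^ (e 0) *
          (MvPolynomial.X (0 : Fin 3) * embt (Polynomial.X ^ (e 2))
            + MvPolynomial.C ((k : ℂ)) * embt (Gop h α (Polynomial.X ^ (e 2)))
            - MvPolynomial.C ((k : ℂ) ^ 2 * α) * embt (Fop h α (Polynomial.X ^ (e 2)))) *
          (MvPolynomial.X (1 : Fin 3)) ^ (e 1)
        + (MvPolynomial.X (0 : Fin 3)) ^ (e 0) * embt (Polynomial.X ^ (e 2)) *
            (MvPolynomial.X (1 : Fin 3) - MvPolynomial.C ((k : ℂ))) ^ (e 1) *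
            (MvPolynomial.X (1 : Fin 3) - MvPolynomial.C (β * k)))

/-- The subspace `W_m` of `Ω(λ,α,h) ⊗ Ω(λ,β) = ℂ[∂₁,∂₂,t]` spanned by
`{∂₁^l (∂₁+∂₂)^n f(t) : 0 ≤ l ≤ m, n ∈ ℤ≥0, f ∈ ℂ[t]}` (indexed by `m : ℤ`, so that
`W_{-1} = 0`). -/
def Wsub (m : ℤ) : Submodule ℂ P3 :=
  Submodule.span ℂ {q | ∃ (l n : ℕ) (f : ℂ[X]), (l : ℤ) ≤ m ∧
    q = (MvPolynomial.X (0 : Fin 3)) ^ l *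
      (MvPolynomial.X (0 : Fin 3) + MvPolynomial.X (1 : Fin 3)) ^ n * embt f}

/-!
In the variables `u = ∂₁` and `∂ = ∂₁ + ∂₂`, i.e. in `ℂ[∂₁,∂₂,t] ≅ ℂ[t][∂][u]`, the subspace `W_m`
consists of the polynomials of `u`-degree at most `m`, so taking the coefficient of `u^m` is a
linear map from `W_m` onto `ℂ[t][∂]` with kernel `W_{m-1}`. On the first factor `d_k` shifts `∂₁`
by `-k`, on the second it shifts `∂₂` by `-k`, which makes `d_k (∂₁^l (∂₁+∂₂)^n f)` explicit. In its
`u^m`-coefficient (for `l ≤ m`) the top terms of the two factors cancel, and for `l = m` the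
contributions `-m k f` of `(u - k)^m` and `-β k f` of `∂₂ - β k` are exactly the effect of
replacing `h` by `h - m - β` in `G`.
-/

theorem map_pow_mul_of_map_mul {M N : Type*} [Monoid M] [Monoid N] (T : M → N) {a : M} {b : N}
    (hT : ∀ p, T (a * p) = b * T p) (n : ℕ) (p : M) : T (a ^ n * p) = b ^ n * T p := by
  induction n with
  | zero => simp
  | succ n ih => rw [pow_succ', mul_assoc, hT, ih, pow_succ', mul_assoc]

theorem Polynomial.coeff_X_sub_C_pow_mul_add {R : Type*} [CommRing R] (γ b d r : R) {l m : ℕ}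
    (hlm : l ≤ m) :
    ((X - C γ) ^ l * (X * C b + C d) + X ^ l * (C r - X) * C b).coeff m =
      if l = m then d - m * γ * b + r * b else 0 := by
  have hsplit : (X - C γ) ^ l * (X * C b + C d) + X ^ l * (C r - X) * C b =
      (X + C (-γ)) ^ (l + 1) * C b + (X + C (-γ)) ^ l * C (γ * b + d) +
        X ^ l * C (r * b) - X ^ (l + 1) * C b := by
    simp only [C_neg, C_mul, C_add, pow_succ]
    ring
  rw [hsplit]
  simp only [coeff_add, coeff_sub, coeff_mul_C, coeff_X_add_C_pow, coeff_X_pow]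
  obtain rfl | rfl | hlt : m = l ∨ m = l + 1 ∨ l + 1 < m := by omega
  · simp [Nat.choose_succ_self_right]
    ring
  · simp
  · simp [Nat.choose_eq_zero_of_lt hlt, Nat.choose_eq_zero_of_lt (by omega : l < m),
      show m ≠ l by omega, show m ≠ l + 1 by omega, show l ≠ m by omega]

namespace MvPolynomial

variable {σ R S : Type*} [CommSemiring R] [CommSemiring S] [Algebra R S]

theorem basisMonomials_constr_monomial (v : (σ →₀ ℕ) → S) (e : σ →₀ ℕ) (a : R) :
    (basisMonomials σ R).constr R v (monomial e a) = a • v e := by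
  have hbasis := (basisMonomials σ R).constr_basis R v e
  rw [coe_basisMonomials] at hbasis
  rw [← mul_one a, ← smul_eq_mul, ← smul_monomial, map_smul, hbasis, smul_eq_mul, mul_one]

theorem basisMonomials_constr_X_mul (v : (σ →₀ ℕ) → S) (i : σ) (y : S)
    (hv : ∀ e, v (e + Finsupp.single i 1) = y * v e) (p : MvPolynomial σ R) :
    (basisMonomials σ R).constr R v (X i * p) = y * (basisMonomials σ R).constr R v p := by
  induction p using MvPolynomial.induction_on' with
  | monomial e a =>
    rw [X, monomial_mul, one_mul, add_comm, basisMonomials_constr_monomial,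
      basisMonomials_constr_monomial, hv, mul_smul_comm]
  | add p q hp hq => rw [mul_add, map_add, map_add, hp, hq, mul_add]

end MvPolynomial

local notation "∂₁" => (MvPolynomial.X 0 : P3)
local notation "∂₂" => (MvPolynomial.X 1 : P3)

def gfTerm (h : ℂ[X]) (α : ℂ) (k : ℤ) : ℂ[X] →ₗ[ℂ] ℂ[X] where
  toFun f := C (k : ℂ) * Gop h α f - C ((k : ℂ) ^ 2 * α) * Fop h α f
  map_add' f g := by simp only [Gop, Fop, derivative_add]; ring
  map_smul' c f := by
    simp only [Gop, Fop, derivative_C_mul, smul_eq_C_mul, RingHom.id_apply]; ring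

theorem gfTerm_sub_C (h : ℂ[X]) (α : ℂ) (k : ℤ) (c : ℂ) (f : ℂ[X]) :
    gfTerm (h - C c) α k f = gfTerm h α k f - C ((k : ℂ) * c) * f := by
  have hquot_sub_C : hquot (h - C c) α = hquot h α := by
    rw [hquot, hquot, eval_sub, eval_C, C_sub, sub_sub_sub_cancel_right]
  have hFop : Fop (h - C c) α f = Fop h α f := by rw [Fop, Fop, hquot_sub_C]
  simp only [gfTerm, LinearMap.coe_mk, AddHom.coe_mk]
  rw [Gop, Gop, hFop, eval_sub, eval_C, C_sub, C_mul (a := (k : ℂ))]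
  ring

def wGen (l n : ℕ) (f : ℂ[X]) : P3 := ∂₁ ^ l * (∂₁ + ∂₂) ^ n * embt f

theorem wGen_mem_Wsub {m : ℤ} {l : ℕ} (n : ℕ) (f : ℂ[X]) (hl : (l : ℤ) ≤ m) :
    wGen l n f ∈ Wsub m :=
  Submodule.subset_span ⟨l, n, f, hl, rfl⟩

theorem map_wGen_of_map_X_mul (T : P3 →ₗ[ℂ] P3) {y₀ y₁ : P3} (h₀ : ∀ p, T (∂₁ * p) = y₀ * T p)
    (h₁ : ∀ p, T (∂₂ * p) = y₁ * T p) (l n : ℕ) (f : ℂ[X]) :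
    T (wGen l n f) = y₀ ^ l * (y₀ + y₁) ^ n * T (embt f) := by
  have hsum : ∀ p, T ((∂₁ + ∂₂) * p) = (y₀ + y₁) * T p := fun p => by
    rw [add_mul, map_add, h₀, h₁, add_mul]
  rw [wGen, mul_assoc, map_pow_mul_of_map_mul T h₀, map_pow_mul_of_map_mul T hsum, mul_assoc]

theorem basisMonomials_constr_embt_X_pow (v : (Fin 3 →₀ ℕ) → P3) (c : ℕ) :
    (MvPolynomial.basisMonomials (Fin 3) ℂ).constr ℂ v (embt (X ^ c)) = v (Finsupp.single 2 c) := by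
  rw [embt, map_pow, aeval_X, MvPolynomial.X_pow_eq_monomial,
    MvPolynomial.basisMonomials_constr_monomial, one_smul]

section Action

variable (h : ℂ[X]) (α β : ℂ) (k : ℤ)

def actFirst : P3 →ₗ[ℂ] P3 :=
  (MvPolynomial.basisMonomials (Fin 3) ℂ).constr ℂ fun e =>
    (∂₁ - MvPolynomial.C (k : ℂ)) ^ e 0 * ∂₂ ^ e 1 *
      (∂₁ * embt (X ^ e 2) + embt (gfTerm h α k (X ^ e 2)))

def actSecond : P3 →ₗ[ℂ] P3 :=
  (MvPolynomial.basisMonomials (Fin 3) ℂ).constr ℂ fun e =>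
    ∂₁ ^ e 0 * (∂₂ - MvPolynomial.C (k : ℂ)) ^ e 1 * embt (X ^ e 2) *
      (∂₂ - MvPolynomial.C (β * k))

theorem tensorD_eq (lam : ℂ) (p : P3) :
    tensorD lam α β h k p = lam ^ k • (actFirst h α k p + actSecond β k p) := by
  rw [tensorD, actFirst, actSecond, ← LinearMap.add_apply, ← map_add, Module.Basis.constr_apply]
  congr 1
  refine Finset.sum_congr rfl fun e _ => ?_
  have hrepr : (MvPolynomial.basisMonomials (Fin 3) ℂ).repr p e = MvPolynomial.coeff e p := rfl
  simp only [hrepr, embt, gfTerm, LinearMap.coe_mk, AddHom.coe_mk, map_sub, map_mul, aeval_C,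
    MvPolynomial.algebraMap_eq, Pi.add_apply, MvPolynomial.smul_eq_C_mul]
  ring

theorem actFirst_X0_mul (p : P3) :
    actFirst h α k (∂₁ * p) = (∂₁ - MvPolynomial.C (k : ℂ)) * actFirst h α k p := by
  refine MvPolynomial.basisMonomials_constr_X_mul _ _ _ (fun e => ?_) p
  simp only [Finsupp.coe_add, Pi.add_apply, Finsupp.single_apply, Fin.reduceEq, ↓reduceIte,
    add_zero, pow_succ]
  ring

theorem actFirst_X1_mul (p : P3) : actFirst h α k (∂₂ * p) = ∂₂ * actFirst h α k p := by
  refine MvPolynomial.basisMonomials_constr_X_mul _ _ _ (fun e => ?_) p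
  simp only [Finsupp.coe_add, Pi.add_apply, Finsupp.single_apply, Fin.reduceEq, ↓reduceIte,
    add_zero, pow_succ]
  ring

theorem actSecond_X0_mul (p : P3) : actSecond β k (∂₁ * p) = ∂₁ * actSecond β k p := by
  refine MvPolynomial.basisMonomials_constr_X_mul _ _ _ (fun e => ?_) p
  simp only [Finsupp.coe_add, Pi.add_apply, Finsupp.single_apply, Fin.reduceEq, ↓reduceIte,
    add_zero, pow_succ]
  ring

theorem actSecond_X1_mul (p : P3) :
    actSecond β k (∂₂ * p) = (∂₂ - MvPolynomial.C (k : ℂ)) * actSecond β k p := by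
  refine MvPolynomial.basisMonomials_constr_X_mul _ _ _ (fun e => ?_) p
  simp only [Finsupp.coe_add, Pi.add_apply, Finsupp.single_apply, Fin.reduceEq, ↓reduceIte,
    add_zero, pow_succ]
  ring

theorem actFirst_embt (f : ℂ[X]) :
    actFirst h α k (embt f) = ∂₁ * embt f + embt (gfTerm h α k f) := by
  induction f using Polynomial.induction_on' with
  | add p q hp hq => simp only [embt, map_add] at hp hq ⊢; rw [hp, hq]; ring
  | monomial c a =>
    rw [← smul_X_eq_monomial]
    simp only [embt, map_smul] at *
    rw [← embt, actFirst, basisMonomials_constr_embt_X_pow]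
    simp [embt]

theorem actSecond_embt (f : ℂ[X]) :
    actSecond β k (embt f) = embt f * (∂₂ - MvPolynomial.C (β * k)) := by
  induction f using Polynomial.induction_on' with
  | add p q hp hq => simp only [embt, map_add] at hp hq ⊢; rw [hp, hq]; ring
  | monomial c a =>
    rw [← smul_X_eq_monomial]
    simp only [embt, map_smul] at *
    rw [← embt, actSecond, basisMonomials_constr_embt_X_pow]
    simp [embt]

theorem actFirst_wGen (l n : ℕ) (f : ℂ[X]) :
    actFirst h α k (wGen l n f) = (∂₁ - MvPolynomial.C (k : ℂ)) ^ l *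
      (∂₁ + ∂₂ - MvPolynomial.C (k : ℂ)) ^ n * (∂₁ * embt f + embt (gfTerm h α k f)) := by
  rw [map_wGen_of_map_X_mul (actFirst h α k) (actFirst_X0_mul h α k)
    (actFirst_X1_mul h α k), sub_add_eq_add_sub, actFirst_embt]

theorem actSecond_wGen (l n : ℕ) (f : ℂ[X]) :
    actSecond β k (wGen l n f) = ∂₁ ^ l * (∂₁ + ∂₂ - MvPolynomial.C (k : ℂ)) ^ n *
      (embt f * (∂₂ - MvPolynomial.C (β * k))) := by
  rw [map_wGen_of_map_X_mul (actSecond β k) (actSecond_X0_mul β k)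
    (actSecond_X1_mul β k), add_sub_assoc, actSecond_embt]

end Action

-- `∂₁ ↦ u`, `∂₂ ↦ ∂ - u`, `t ↦ t`, with `u` the outer variable of `ℂ[t][∂][u]`.
def toDiagonal : P3 →ₐ[ℂ] (ℂ[X][X])[X] :=
  MvPolynomial.aeval ![(X : (ℂ[X][X])[X]), C X - X, C (C X)]

@[simp] theorem toDiagonal_X0 : toDiagonal ∂₁ = X := by simp [toDiagonal]
@[simp] theorem toDiagonal_X1 : toDiagonal ∂₂ = C X - X := by simp [toDiagonal]

@[simp] theorem toDiagonal_C (z : ℂ) : toDiagonal (MvPolynomial.C z) = C (C (C z)) := by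
  simp [toDiagonal, Polynomial.algebraMap_apply]

@[simp] theorem toDiagonal_embt (f : ℂ[X]) : toDiagonal (embt f) = C (C f) := by
  have hcomp : toDiagonal.comp (aeval (MvPolynomial.X 2)) =
      (CAlgHom.comp CAlgHom : ℂ[X] →ₐ[ℂ] (ℂ[X][X])[X]) :=
    Polynomial.algHom_ext (by simp [toDiagonal])
  exact DFunLike.congr_fun hcomp f

def diagCoeff (m : ℕ) : P3 →ₗ[ℂ] ℂ[X][X] :=
  ((lcoeff ℂ[X][X] m).restrictScalars ℂ).comp toDiagonal.toLinearMap

theorem diagCoeff_apply (m : ℕ) (p : P3) : diagCoeff m p = (toDiagonal p).coeff m := rfl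

theorem diagCoeff_wGen (m l n : ℕ) (f : ℂ[X]) :
    diagCoeff m (wGen l n f) = if l = m then X ^ n * C f else 0 := by
  have hdiag : toDiagonal (wGen l n f) = C (X ^ n * C f) * X ^ l := by
    simp only [wGen, map_mul, map_pow, map_add, toDiagonal_X0, toDiagonal_X1, toDiagonal_embt]
    ring
  rw [diagCoeff_apply, hdiag, coeff_C_mul_X_pow]
  simp only [eq_comm]

def ofDiagonal : ℂ[X][X] →ₐ[ℂ] P3 :=
  eval₂AlgHom (aeval (MvPolynomial.X 2)) (∂₁ + ∂₂) fun _ => Commute.all _ _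

theorem toDiagonal_ofDiagonal (g : ℂ[X][X]) : toDiagonal (ofDiagonal g) = C g := by
  have hcomp : toDiagonal.comp ofDiagonal = CAlgHom := by
    refine Polynomial.algHom_ext' (Polynomial.algHom_ext ?_) ?_
    · simp [ofDiagonal, toDiagonal]
    · simp only [AlgHom.comp_apply, ofDiagonal, eval₂AlgHom_apply, eval₂_X, map_add,
        toDiagonal_X0, toDiagonal_X1, CAlgHom_apply]
      ring
  exact DFunLike.congr_fun hcomp g

def liftTop (m : ℕ) : ℂ[X][X] →ₗ[ℂ] P3 :=
  LinearMap.mulLeft ℂ (∂₁ ^ m) ∘ₗ ofDiagonal.toLinearMap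

theorem diagCoeff_liftTop (m : ℕ) (g : ℂ[X][X]) : diagCoeff m (liftTop m g) = g := by
  simp [diagCoeff_apply, liftTop, toDiagonal_ofDiagonal]

theorem liftTop_X_pow_mul_C (m n : ℕ) (f : ℂ[X]) : liftTop m (X ^ n * C f) = wGen m n f := by
  simp only [liftTop, ofDiagonal, LinearMap.coe_comp, Function.comp_apply, AlgHom.toLinearMap_apply,
    map_mul, map_pow, eval₂AlgHom_apply, eval₂_X, eval₂_C, AlgHom.coe_toRingHom,
    LinearMap.mulLeft_apply, wGen, embt]
  ring

theorem liftTop_mem_Wsub (m : ℕ) (g : ℂ[X][X]) : liftTop m g ∈ Wsub m := by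
  induction g using Polynomial.induction_on' with
  | add p q hp hq => rw [map_add]; exact add_mem hp hq
  | monomial n f =>
    rw [← C_mul_X_pow_eq_monomial, mul_comm, liftTop_X_pow_mul_C]
    exact wGen_mem_Wsub n f le_rfl

theorem Wsub_pred_le_ker_diagCoeff (m : ℕ) : Wsub ((m : ℤ) - 1) ≤ LinearMap.ker (diagCoeff m) := by
  rw [Wsub, Submodule.span_le]
  rintro _ ⟨l, n, f, hl, rfl⟩
  rw [SetLike.mem_coe, LinearMap.mem_ker, ← wGen, diagCoeff_wGen, if_neg (by omega)]

theorem Wsub_le_comap_sub_liftTop_diagCoeff (m : ℕ) :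
    Wsub m ≤ (Wsub ((m : ℤ) - 1)).comap (LinearMap.id - liftTop m ∘ₗ diagCoeff m) := by
  rw [Wsub, Submodule.span_le]
  rintro _ ⟨l, n, f, hl, rfl⟩
  rw [SetLike.mem_coe, Submodule.mem_comap, ← wGen, LinearMap.sub_apply, LinearMap.comp_apply,
    diagCoeff_wGen, LinearMap.id_apply]
  split_ifs with hlm
  · rw [hlm, liftTop_X_pow_mul_C, sub_self]
    exact zero_mem _
  · rw [map_zero, sub_zero]
    exact wGen_mem_Wsub n f (by omega)

theorem mem_Wsub_pred_iff (m : ℕ) {p : P3} (hp : p ∈ Wsub m) :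
    p ∈ Wsub ((m : ℤ) - 1) ↔ diagCoeff m p = 0 := by
  refine ⟨fun hp' => Wsub_pred_le_ker_diagCoeff m hp', fun hp0 => ?_⟩
  have hsub := Wsub_le_comap_sub_liftTop_diagCoeff m hp
  rwa [Submodule.mem_comap, LinearMap.sub_apply, LinearMap.comp_apply, hp0, map_zero,
    LinearMap.id_apply, sub_zero] at hsub

def omegaDLinear (lam α : ℂ) (h : ℂ[X]) (k : ℤ) : ℂ[X][X] →ₗ[ℂ] ℂ[X][X] :=
  lam ^ k • lsum fun i => LinearMap.mulLeft ℂ ((X - C (C (k : ℂ))) ^ i) ∘ₗ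
    (LinearMap.mulLeft ℂ X ∘ₗ (CAlgHom : ℂ[X] →ₐ[ℂ] ℂ[X][X]).toLinearMap +
      (CAlgHom : ℂ[X] →ₐ[ℂ] ℂ[X][X]).toLinearMap ∘ₗ gfTerm h α k)

theorem omegaDLinear_apply (lam α : ℂ) (h : ℂ[X]) (k : ℤ) (p : ℂ[X][X]) :
    omegaDLinear lam α h k p = omegaD lam α h k p := rfl

theorem omegaD_X_pow_mul_C (lam α : ℂ) (h : ℂ[X]) (k : ℤ) (n : ℕ) (f : ℂ[X]) :
    omegaD lam α h k (X ^ n * C f) =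
      lam ^ k • ((X - C (C (k : ℂ))) ^ n * (X * C f + C (gfTerm h α k f))) := by
  rw [← omegaDLinear_apply, omegaDLinear, mul_comm, C_mul_X_pow_eq_monomial, LinearMap.smul_apply,
    lsum_apply, sum_monomial_index _ _ (by exact map_zero _)]
  rfl

theorem diagCoeff_act_wGen (h : ℂ[X]) (α β : ℂ) (k : ℤ) {l m : ℕ} (hlm : l ≤ m) (n : ℕ)
    (f : ℂ[X]) :
    diagCoeff m (actFirst h α k (wGen l n f) + actSecond β k (wGen l n f)) =
      if l = m then (X - C (C (k : ℂ))) ^ n * (X * C f + C (gfTerm (h - C (m + β)) α k f))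
      else 0 := by
  set P : ℂ[X][X] := (X - C (C (k : ℂ))) ^ n
  have hdiag : toDiagonal (actFirst h α k (wGen l n f) + actSecond β k (wGen l n f)) =
      (X - C (C (C (k : ℂ)))) ^ l * (X * C (P * C f) + C (P * C (gfTerm h α k f))) +
        X ^ l * (C (X - C (C (β * k))) - X) * C (P * C f) := by
    simp only [actFirst_wGen, actSecond_wGen, P, map_add, map_sub, map_mul, map_pow,
      toDiagonal_X0, toDiagonal_X1, toDiagonal_C, toDiagonal_embt]
    ring
  rw [diagCoeff_apply, hdiag, coeff_X_sub_C_pow_mul_add _ _ _ _ hlm]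
  split_ifs
  · rw [gfTerm_sub_C]
    simp only [C_sub, C_mul, C_add, map_natCast]
    ring
  · rfl

theorem diagCoeff_tensorD (lam α β : ℂ) (h : ℂ[X]) (k : ℤ) (m : ℕ) {p : P3} (hp : p ∈ Wsub m) :
    diagCoeff m (tensorD lam α β h k p) = omegaD lam α (h - C (m + β)) k (diagCoeff m p) := by
  suffices Wsub m ≤ LinearMap.eqLocus (diagCoeff m ∘ₗ (lam ^ k • (actFirst h α k + actSecond β k)))
      (omegaDLinear lam α (h - C (m + β)) k ∘ₗ diagCoeff m) by
    have hp' := this hp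
    rwa [LinearMap.mem_eqLocus, LinearMap.comp_apply, LinearMap.comp_apply, LinearMap.smul_apply,
      LinearMap.add_apply, ← tensorD_eq, omegaDLinear_apply] at hp'
  rw [Wsub, Submodule.span_le]
  rintro _ ⟨l, n, f, hl, rfl⟩
  rw [SetLike.mem_coe, LinearMap.mem_eqLocus, ← wGen, LinearMap.comp_apply, LinearMap.comp_apply,
    LinearMap.smul_apply, LinearMap.add_apply, map_smul, diagCoeff_act_wGen h α β k (by omega),
    diagCoeff_wGen]
  split_ifs
  · rw [omegaDLinear_apply, omegaD_X_pow_mul_C]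
  · rw [map_zero, smul_zero]

theorem stmt8_general (lam α β : ℂ) (h : ℂ[X]) (m : ℕ) :
    ∃ Φ : ↥(Wsub (m : ℤ)) →ₗ[ℂ] Polynomial ℂ[X],
      LinearMap.ker Φ = (Wsub ((m : ℤ) - 1)).comap (Wsub (m : ℤ)).subtype ∧
      Function.Surjective Φ ∧
      (∀ (k : ℤ) (x y : ↥(Wsub (m : ℤ))), (y : P3) = tensorD lam α β h k (x : P3) →
        Φ y = omegaD lam α (h - C ((m : ℂ) + β)) k (Φ x)) ∧
      (∀ (n : ℕ) (f : ℂ[X]) (x : ↥(Wsub (m : ℤ))),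
        (x : P3) = (MvPolynomial.X (0 : Fin 3)) ^ m *
            (MvPolynomial.X (0 : Fin 3) + MvPolynomial.X (1 : Fin 3)) ^ n * embt f →
        Φ x = (X : Polynomial ℂ[X]) ^ n * Polynomial.C f) := by
  refine ⟨diagCoeff m ∘ₗ (Wsub m).subtype, ?_,
    fun g => ⟨⟨liftTop m g, liftTop_mem_Wsub m g⟩, diagCoeff_liftTop m g⟩,
    fun k x y hy => ?_, fun n f x hx => ?_⟩
  · ext x
    exact (mem_Wsub_pred_iff m x.2).symm
  · rw [LinearMap.comp_apply, LinearMap.comp_apply, Submodule.subtype_apply, hy]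
    exact diagCoeff_tensorD lam α β h k m x.2
  · rw [LinearMap.comp_apply, Submodule.subtype_apply, hx, ← wGen, diagCoeff_wGen, if_pos rfl]

/-- For `λ, α, β ∈ ℂ*`, `deg h = 1`, `m ∈ ℤ≥0` (with `W_{-1} = 0`), the quotient Virasoro
module `W_m / W_{m-1}` is isomorphic to `Ω(λ, α, h - m - β)` via
`∂₁^m (∂₁+∂₂)^n f + W_{m-1} ↦ ∂^n f`:  there is a `ℂ`-linear map `Φ : W_m → ℂ[t,∂]` with
kernel `W_{m-1}`, surjective, intertwining the Virasoro actions, and sending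
`∂₁^m (∂₁+∂₂)^n f` to `∂^n f`. -/
theorem stmt8 (lam α β : ℂ) (hlam : lam ≠ 0) (hα : α ≠ 0) (hβ : β ≠ 0)
    (h : ℂ[X]) (hh : h.degree = 1) (m : ℕ) :
    ∃ Φ : ↥(Wsub (m : ℤ)) →ₗ[ℂ] Polynomial ℂ[X],
      LinearMap.ker Φ = (Wsub ((m : ℤ) - 1)).comap (Wsub (m : ℤ)).subtype ∧
      Function.Surjective Φ ∧
      (∀ (k : ℤ) (x y : ↥(Wsub (m : ℤ))), (y : P3) = tensorD lam α β h k (x : P3) →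
        Φ y = omegaD lam α (h - C ((m : ℂ) + β)) k (Φ x)) ∧
      (∀ (n : ℕ) (f : ℂ[X]) (x : ↥(Wsub (m : ℤ))),
        (x : P3) = (MvPolynomial.X (0 : Fin 3)) ^ m *
            (MvPolynomial.X (0 : Fin 3) + MvPolynomial.X (1 : Fin 3)) ^ n * embt f →
        Φ x = (X : Polynomial ℂ[X]) ^ n * Polynomial.C f) :=
  stmt8_general lam α β h m
end
end
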